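/- Let P₀ be a locally stratified program and let P₀,…,Pᵢ,…,P_j,…,Pₘ,…,Pₙ be an ordered transformation sequence. Then, for every ground atom A, there exists a proof tree for A and Pᵢ if and only if there exists a proof tree for A and P_j. -/

import Mathlib

/-!
Positive unfolding of `γ : H ← c ∧ G_L ∧ A ∧ G_R` preserves proof trees relative to any fixed
condition on the negative leaves: a node built from `γ` whose child for `A` is built from a
clause `δ` merges into a single node built from the unfolded clause (the variant of `δ` shares
no variable with `γ`, so one valuation instantiates both), and conversely such a node splits
into two. Since the condition on a negative leaf `¬B` only involves proof trees for atoms of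
stratum below that of `B`, well-founded induction on the stratum shows that each unfolding step
`Pₖ ⟶ Pₖ₊₁` preserves the existence of proof trees, and between `Pᵢ` and `P_j` an ordered
transformation sequence applies nothing but positive unfolding.
-/

namespace CLPS

abbrev Vr := ℕ

inductive Trm (F : Type) : Type where
  | var : Vr → Trm F
  | fn : F → List (Trm F) → Trm F

variable {F D Pu : Type}

def Trm.eval (fi : F → List D → D) (v : Vr → D) : Trm F → D
  | .var x => v x
  | .fn f ts => fi f (ts.attach.map (fun t => Trm.eval fi v t.1))
decreasing_by
  have h := List.sizeOf_lt_of_mem t.2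
  simp only [Trm.fn.sizeOf_spec]
  omega

def Trm.subst (s : Vr → Trm F) : Trm F → Trm F
  | .var x => s x
  | .fn f ts => .fn f (ts.attach.map (fun t => Trm.subst s t.1))
decreasing_by
  have h := List.sizeOf_lt_of_mem t.2
  simp only [Trm.fn.sizeOf_spec]
  omega

inductive Trm.VarIn : Vr → Trm F → Prop where
  | var {x} : VarIn x (.var x)
  | fn {x f ts t} : t ∈ ts → VarIn x t → VarIn x (.fn f ts)

def Trm.fv (t : Trm F) : Set Vr := {x | t.VarIn x}

theorem Trm.eval_congr (fi : F → List D → D) :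
    ∀ (n : ℕ) (t : Trm F), sizeOf t ≤ n → ∀ (v w : Vr → D),
      (∀ x, t.VarIn x → v x = w x) → t.eval fi v = t.eval fi w := by
  intro n
  induction n with
  | zero =>
    intro t ht
    cases t <;> simp_all
  | succ n ih =>
    intro t ht v w hvw
    cases t with
    | var x => simpa [Trm.eval] using hvw x .var
    | fn f ts =>
      rw [Trm.eval, Trm.eval]
      congr 1
      refine List.map_congr_left ?_
      rintro ⟨t, htmem⟩ -
      have hsz : sizeOf t ≤ n := by
        have h1 := List.sizeOf_lt_of_mem htmem
        have h2 : sizeOf (Trm.fn f ts) = 1 + sizeOf f + sizeOf ts := by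
          simp [Trm.fn.sizeOf_spec]
        omega
      exact ih t hsz v w (fun x hx => hvw x (.fn htmem hx))

end CLPS

namespace CLPS

variable {F D Pu : Type}

/-- A constraint, represented by its satisfaction predicate on valuations (the
interpretation `𝒟` for the constraints is thereby fixed), together with the set of
its free variables; `supp` states that satisfaction only depends on the free
variables. -/
structure Constr (D : Type) : Type where
  sat : (Vr → D) → Prop
  fv : Set Vr
  supp : ∀ v w : Vr → D, (∀ x ∈ fv, v x = w x) → sat v → sat w

/-- the always-true (empty) constraint -/
def Constr.tt : Constr D := ⟨fun _ => True, ∅, by intro _ _ _ h; exact h⟩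

/-- conjunction of constraints -/
def Constr.conj (c d : Constr D) : Constr D where
  sat := fun v => c.sat v ∧ d.sat v
  fv := c.fv ∪ d.fv
  supp := by
    rintro v w h ⟨hc, hd⟩
    exact ⟨c.supp v w (fun x hx => h x (Set.mem_union_left _ hx)) hc,
      d.supp v w (fun x hx => h x (Set.mem_union_right _ hx)) hd⟩

/-- negation of a constraint -/
def Constr.neg (c : Constr D) : Constr D where
  sat := fun v => ¬ c.sat v
  fv := c.fv
  supp := by
    intro v w h hn hs
    exact hn (c.supp w v (fun x hx => (h x hx).symm) hs)

/-- the constraint `t₁ = u₁ ∧ … ∧ tₙ = uₙ` between two lists of terms -/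
def eqTrms (fi : F → List D → D) (as bs : List (Trm F)) : Constr D where
  sat := fun v => as.map (Trm.eval fi v) = bs.map (Trm.eval fi v)
  fv := {x | (∃ t ∈ as, t.VarIn x) ∨ (∃ t ∈ bs, t.VarIn x)}
  supp := by
    intro v w h hs
    have hmap : ∀ (ts : List (Trm F)),
        (∀ t ∈ ts, ∀ x, t.VarIn x → v x = w x) →
        ts.map (Trm.eval fi v) = ts.map (Trm.eval fi w) := by
      intro ts hts
      refine List.map_congr_left ?_
      intro t ht
      exact Trm.eval_congr fi (sizeOf t) t le_rfl v w (hts t ht)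
    rw [← hmap as fun t ht x hx => h x (Or.inl ⟨t, ht, hx⟩),
      ← hmap bs fun t ht x hx => h x (Or.inr ⟨t, ht, hx⟩)]
    exact hs

/-- application of a substitution to a constraint -/
def Constr.subst (fi : F → List D → D) (s : Vr → Trm F) (c : Constr D) : Constr D where
  sat := fun v => c.sat (fun x => (s x).eval fi v)
  fv := {y | ∃ x ∈ c.fv, (s x).VarIn y}
  supp := by
    intro v w h hs
    refine c.supp _ _ ?_ hs
    intro x hx
    exact Trm.eval_congr fi _ (s x) le_rfl v w (fun y hy => h y ⟨x, hx, hy⟩)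

/-- `∃Y c` : satisfaction of the existential quantification of the constraint `c`
over the set `Y` of variables -/
def existsOverSat (Y : Set Vr) (c : Constr D) (v : Vr → D) : Prop :=
  ∃ v' : Vr → D, (∀ x, x ∉ Y → v' x = v x) ∧ c.sat v'

end CLPS

namespace CLPS

variable {F D Pu : Type}

/-- An atom: a user-defined predicate symbol applied to a list of terms. -/
structure Atm (F Pu : Type) where
  pred : Pu
  args : List (Trm F)

/-- ground atoms (the base `B_𝒟`) -/
abbrev GrAtm (Pu D : Type) := Pu × List D

/-- the ground atom `v(A)` -/
def Atm.eval (fi : F → List D → D) (v : Vr → D) (A : Atm F Pu) : GrAtm Pu D :=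
  (A.pred, A.args.map (Trm.eval fi v))

/-- application of a substitution to an atom -/
def Atm.subst (s : Vr → Trm F) (A : Atm F Pu) : Atm F Pu :=
  ⟨A.pred, A.args.map (Trm.subst s)⟩

/-- the free variables of an atom -/
def Atm.fv (A : Atm F Pu) : Set Vr := {x | ∃ t ∈ A.args, t.VarIn x}

/-- a literal: a sign (`true` = positive, `false` = negative) and an atom -/
abbrev Lit (F Pu : Type) := Bool × Atm F Pu

/-- a goal: a list of literals -/
abbrev Goal (F Pu : Type) := List (Lit F Pu)

/-- application of a substitution to a literal -/
def Lit.subst (s : Vr → Trm F) (l : Lit F Pu) : Lit F Pu := (l.1, l.2.subst s)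

/-- application of a substitution to a goal -/
def Goal.subst (s : Vr → Trm F) (G : Goal F Pu) : Goal F Pu := G.map (Lit.subst s)

/-- the free variables of a goal -/
def Goal.fv (G : Goal F Pu) : Set Vr := {x | ∃ l ∈ G, x ∈ (l.2).fv}

/-- A clause `H ← c ∧ G` -/
structure Clse (F Pu D : Type) where
  head : Atm F Pu
  constr : Constr D
  body : Goal F Pu

/-- the free variables of a clause -/
def Clse.fv (γ : Clse F Pu D) : Set Vr := γ.head.fv ∪ γ.constr.fv ∪ Goal.fv γ.body

/-- application of a substitution to a clause -/
def Clse.subst (fi : F → List D → D) (s : Vr → Trm F) (γ : Clse F Pu D) : Clse F Pu D :=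
  ⟨γ.head.subst s, γ.constr.subst fi s, Goal.subst s γ.body⟩

/-- a constraint logic program: a set of clauses (finiteness is stated separately) -/
abbrev Prog (F Pu D : Type) := Set (Clse F Pu D)

/-- the substitution renaming variables according to `ρ` -/
def rsub (ρ : Vr ≃ Vr) : Vr → Trm F := fun x => Trm.var (ρ x)

/-- the variant of a clause obtained by applying the renaming `ρ` -/
def Clse.rename (fi : F → List D → D) (ρ : Vr ≃ Vr) (γ : Clse F Pu D) : Clse F Pu D :=
  γ.subst fi (rsub ρ)

/-- the ground literal `v(L)` -/
def glit (fi : F → List D → D) (v : Vr → D) (l : Lit F Pu) : Bool × GrAtm Pu D :=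
  (l.1, l.2.eval fi v)

/-- truth of a ground literal in a `D`-interpretation -/
def litTrue (I : Set (GrAtm Pu D)) (l : Bool × GrAtm Pu D) : Prop :=
  if l.1 then l.2 ∈ I else l.2 ∉ I

/-- `I` is a `D`-model of `P` -/
def isModel (fi : F → List D → D) (I : Set (GrAtm Pu D)) (P : Prog F Pu D) : Prop :=
  ∀ γ ∈ P, ∀ v : Vr → D, γ.constr.sat v →
    (∀ l ∈ γ.body, litTrue I (glit fi v l)) → γ.head.eval fi v ∈ I

end CLPS

namespace CLPS

/-- `W` : the set of countable ordinals -/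
abbrev W : Type 1 := {o : Ordinal.{0} // o < (Cardinal.aleph 1).ord}

theorem natW_lt (n : ℕ) : (n : Ordinal.{0}) < (Cardinal.aleph 1).ord := by
  refine Cardinal.lt_ord.mpr ?_
  simpa using (Cardinal.nat_lt_aleph0 n).trans Cardinal.aleph0_lt_aleph_one

/-- natural numbers as countable ordinals -/
def natW (n : ℕ) : W := ⟨n, natW_lt n⟩

/-- the zero ordinal in `W` -/
def zeroW : W := natW 0

variable {F D Pu : Type}

/-- the ground instance `v(γ)` is locally stratified w.r.t. `σ` -/
def clauseLS (fi : F → List D → D) (σ : GrAtm Pu D → W) (γ : Clse F Pu D) : Prop :=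
  ∀ v : Vr → D, γ.constr.sat v → ∀ l ∈ γ.body,
    (l.1 = true → σ (l.2.eval fi v) ≤ σ (γ.head.eval fi v)) ∧
    (l.1 = false → σ (l.2.eval fi v) < σ (γ.head.eval fi v))

/-- `P` is locally stratified w.r.t. `σ` -/
def progLS (fi : F → List D → D) (σ : GrAtm Pu D → W) (P : Prog F Pu D) : Prop :=
  ∀ γ ∈ P, clauseLS fi σ γ

/-- `P` is locally stratified -/
def LocStrat (fi : F → List D → D) (P : Prog F Pu D) : Prop := ∃ σ, progLS fi σ P

/-- `I ≺ J` : `I` is preferable to `J` w.r.t. `σ` -/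
def pref (σ : GrAtm Pu D → W) (I J : Set (GrAtm Pu D)) : Prop :=
  ∀ A₁ ∈ I \ J, ∃ A₂ ∈ J \ I, σ A₂ < σ A₁

/-- `M` is a perfect model of `P` w.r.t. `σ` -/
def PerfWrt (fi : F → List D → D) (σ : GrAtm Pu D → W) (P : Prog F Pu D)
    (M : Set (GrAtm Pu D)) : Prop :=
  isModel fi M P ∧ ∀ N, isModel fi N P → N ≠ M → pref σ M N

/-- `M` is a perfect model of `P` -/
def IsPerf (fi : F → List D → D) (P : Prog F Pu D) (M : Set (GrAtm Pu D)) : Prop :=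
  ∃ σ, progLS fi σ P ∧ PerfWrt fi σ P M

/-- the predicate `p` occurs in the goal `G` -/
def predInGoal (p : Pu) (G : Goal F Pu) : Prop := ∃ l ∈ G, (l.2).pred = p

/-- the predicate `p` occurs in the clause `γ` -/
def predInClause (p : Pu) (γ : Clse F Pu D) : Prop :=
  γ.head.pred = p ∨ predInGoal p γ.body

/-- the predicate `p` occurs in the program `P` -/
def predInProg (p : Pu) (P : Prog F Pu D) : Prop := ∃ γ ∈ P, predInClause p γ

/-- `Def(p, P)` : the definition of the predicate `p` in `P` -/
def DefOf (p : Pu) (P : Prog F Pu D) : Prog F Pu D := {γ ∈ P | γ.head.pred = p}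

/-- `p` immediately depends on `q` in `P` -/
def immDep (P : Prog F Pu D) (p q : Pu) : Prop :=
  ∃ γ ∈ P, γ.head.pred = p ∧ predInGoal q γ.body

/-- `p` depends on `q` in `P` -/
def dependsOn (P : Prog F Pu D) : Pu → Pu → Prop := Relation.TransGen (immDep P)

end CLPS

namespace CLPS

variable {F D Pu : Type}

/-- the domain of a substitution -/
def sdom (s : Vr → Trm F) : Set Vr := {x | s x ≠ Trm.var x}

/-- the substitution is idempotent (no domain variable occurs in a range term)
and has finite domain -/
def Idempotent (s : Vr → Trm F) : Prop :=
  (sdom s).Finite ∧ ∀ x : Vr, ∀ y ∈ sdom s, ¬ (s x).VarIn y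

/-- the substitution `{X/t}` -/
def singleSub (X : Vr) (t : Trm F) : Vr → Trm F :=
  fun y => if y = X then t else Trm.var y

/-! ### R1. Definition introduction -/

/-- **Rule R1 (definition introduction).** The clauses
`δᵢ : newp(X₁,…,X_h) ← cᵢ ∧ Gᵢ` (`i = 1,…,m`, `m ≥ 1`) are added to `Pₖ`, where:
(i) `newp` does not occur in `P₀,…,Pₖ`; (ii) `X₁,…,X_h` are distinct variables
occurring in `FV({c₁ ∧ G₁,…,cₘ ∧ Gₘ})`; (iii) every predicate occurring in
`G₁,…,Gₘ` occurs in `P₀`; (iv) for every ground substitution `θ` with domain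
`{X₁,…,X_h}`, `σ(newp(X₁,…,X_h)θ)` is the least ordinal `α` such that for every
valuation `v` and every `i`, either `𝒟 ⊭ v(cᵢθ)` or for every literal `L` of
`v(Gᵢθ)`, `α ≥ σ(A)` if `L` is an atom `A` and `α > σ(A)` if `L` is `¬A`. -/
def DefIntroStep (fi : F → List D → D) (σ : GrAtm Pu D → W)
    (hist : ℕ → Prog F Pu D) (k : ℕ) (Dk : Prog F Pu D)
    (δs : List (Clse F Pu D)) (P P' D' : Prog F Pu D) : Prop :=
  δs ≠ [] ∧
  (∃ (newp : Pu) (xs : List Vr), xs.Nodup ∧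
    (∀ δ ∈ δs, δ.head = ⟨newp, xs.map Trm.var⟩) ∧
    (∀ j ≤ k, ¬ predInProg newp (hist j)) ∧
    (∀ x ∈ xs, ∃ δ ∈ δs, x ∈ δ.constr.fv ∪ Goal.fv δ.body) ∧
    (∀ δ ∈ δs, ∀ l ∈ δ.body, predInProg (l.2).pred (hist 0)) ∧
    (∀ d : Vr → D,
      IsLeast {α : W | ∀ w : Vr → D, (∀ x ∈ xs, w x = d x) → ∀ δ ∈ δs,
          δ.constr.sat w → ∀ l ∈ δ.body,
            (l.1 = true → σ (l.2.eval fi w) ≤ α) ∧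
            (l.1 = false → σ (l.2.eval fi w) < α)}
        (σ (newp, (xs.map Trm.var).map (Trm.eval fi d))))) ∧
  P' = P ∪ {δ | δ ∈ δs} ∧ D' = Dk ∪ {δ | δ ∈ δs}

/-! ### R2. Definition elimination -/

/-- **Rule R2 (definition elimination).** The definition of a predicate `p` on which
no predicate of the set `Pint` of predicates of interest depends is removed. -/
def DefElimStep (Pint : Set Pu) (p : Pu) (P P' : Prog F Pu D) : Prop :=
  (∀ q ∈ Pint, ¬ dependsOn P q p) ∧ P' = P \ DefOf p P

/-! ### R3. Positive unfolding -/

/-- **Rule R3 (positive unfolding).** The clause `γ : H ← c ∧ G_L ∧ A ∧ G_R ∈ Pₖ`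
is replaced by the clauses `H ← c ∧ A = Kᵢ ∧ cᵢ ∧ G_L ∧ Bᵢ ∧ G_R`, one for each
clause `Kᵢ ← cᵢ ∧ Bᵢ` of a variant `P'ₖ` of `Pₖ` without common variables with `γ`
such that `𝒟 ⊨ ∃(c ∧ A = Kᵢ ∧ cᵢ)`. -/
def PosUnfoldStep (fi : F → List D → D) (γ : Clse F Pu D) (P P' : Prog F Pu D) : Prop :=
  γ ∈ P ∧
  ∃ (H : Atm F Pu) (c : Constr D) (Gl Gr : Goal F Pu) (A : Atm F Pu),
    γ = ⟨H, c, Gl ++ (true, A) :: Gr⟩ ∧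
    ∃ ρ : Vr ≃ Vr,
      (∀ δ ∈ P, ∀ x ∈ (Clse.rename fi ρ δ).fv, x ∉ γ.fv) ∧
      P' = (P \ {γ}) ∪
        {η | ∃ δ ∈ P,
          (Clse.rename fi ρ δ).head.pred = A.pred ∧
          (∃ v : Vr → D,
            (c.conj ((eqTrms fi A.args (Clse.rename fi ρ δ).head.args).conj
              (Clse.rename fi ρ δ).constr)).sat v) ∧
          η = ⟨H, c.conj ((eqTrms fi A.args (Clse.rename fi ρ δ).head.args).conj
                  (Clse.rename fi ρ δ).constr),
                Gl ++ (Clse.rename fi ρ δ).body ++ Gr⟩}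

end CLPS

namespace CLPS

variable {F D Pu : Type}

/-- conjunction of a constraint with a list of constraints -/
def conjWith (c : Constr D) (cs : List (Constr D)) : Constr D :=
  cs.foldl Constr.conj c

/-! ### R4. Negative unfolding -/

/-- **Rule R4 (negative unfolding).** The clause `γ : H ← c ∧ G_L ∧ ¬A ∧ G_R ∈ Pₖ`
is unfolded w.r.t. `¬A`. Let `γᵢ : Kᵢ ← cᵢ ∧ Bᵢ` (`i = 1,…,m`) be all the clauses of
a variant `P'ₖ` of `Pₖ` (without common variables with `γ`) such that
`𝒟 ⊨ ∃(c ∧ A = Kᵢ ∧ cᵢ)`, and suppose that for each `i` there are an idempotent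
substitution `θᵢ` and a constraint `dᵢ` such that
(i) `𝒟 ⊨ ∀(c → ((A = Kᵢ ∧ cᵢ) ↔ (X_{i1} = t_{i1} ∧ … ∧ X_{in} = t_{in} ∧ dᵢ)))`
where `{X_{i1}/t_{i1},…}` are the bindings of `θᵢ`,
(ii) `dom(θᵢ) ⊆ FV(γᵢ)`, and (iii) `FV(dᵢ ∧ Bᵢθᵢ) ⊆ FV(c ∧ A)`.
Then `γ` is replaced by the clauses obtained by eliminating the existential
quantifiers, pushing `¬` inside, pushing `∨` outside, and removing the
unsatisfiable disjuncts: each resulting clause corresponds to a choice which, for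
every `i`, either takes the constraint `¬dᵢ`, or takes the constraint `dᵢ` together
with the complement of one literal of `Bᵢθᵢ`. -/
def NegUnfoldStep (fi : F → List D → D) (γ : Clse F Pu D) (P P' : Prog F Pu D) : Prop :=
  γ ∈ P ∧
  ∃ (H : Atm F Pu) (c : Constr D) (Gl Gr : Goal F Pu) (A : Atm F Pu),
    γ = ⟨H, c, Gl ++ (false, A) :: Gr⟩ ∧
    ∃ ρ : Vr ≃ Vr,
      (∀ δ ∈ P, ∀ x ∈ (Clse.rename fi ρ δ).fv, x ∉ γ.fv) ∧
      ∃ ms : List (Clse F Pu D × (Vr → Trm F) × Constr D),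
        -- the clauses in `ms` are clauses of the variant of `Pₖ` for which the
        -- constraint `c ∧ A = Kᵢ ∧ cᵢ` is satisfiable, …
        (∀ e ∈ ms, (∃ δ ∈ P, e.1 = Clse.rename fi ρ δ) ∧
          e.1.head.pred = A.pred ∧
          (∃ v : Vr → D, (c.conj ((eqTrms fi A.args e.1.head.args).conj e.1.constr)).sat v)) ∧
        -- … and they are all such clauses
        (∀ δ ∈ P, (Clse.rename fi ρ δ).head.pred = A.pred →
          (∃ v : Vr → D, (c.conj ((eqTrms fi A.args (Clse.rename fi ρ δ).head.args).conj
            (Clse.rename fi ρ δ).constr)).sat v) →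
          ∃ e ∈ ms, e.1 = Clse.rename fi ρ δ) ∧
        -- conditions (i), (ii), (iii) on `θᵢ` and `dᵢ`
        (∀ e ∈ ms,
          Idempotent e.2.1 ∧
          (∀ v : Vr → D, c.sat v →
            (((eqTrms fi A.args e.1.head.args).sat v ∧ e.1.constr.sat v) ↔
              ((∀ y ∈ sdom e.2.1, v y = (e.2.1 y).eval fi v) ∧ e.2.2.sat v))) ∧
          sdom e.2.1 ⊆ e.1.fv ∧
          (e.2.2.fv ∪ Goal.fv (Goal.subst e.2.1 e.1.body) ⊆ c.fv ∪ A.fv)) ∧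
        P' = (P \ {γ}) ∪
          {η | ∃ picks : List (Constr D × Goal F Pu),
            List.Forall₂ (fun (e : Clse F Pu D × (Vr → Trm F) × Constr D)
                (pk : Constr D × Goal F Pu) =>
              pk = (Constr.neg e.2.2, []) ∨
              ∃ l ∈ Goal.subst e.2.1 e.1.body, pk = (e.2.2, [(!l.1, l.2)]))
              ms picks ∧
            (∃ v : Vr → D, (conjWith c (picks.map Prod.fst)).sat v) ∧
            η = ⟨H, conjWith c (picks.map Prod.fst),
                  Gl ++ (picks.map Prod.snd).flatten ++ Gr⟩}

end CLPS

namespace CLPS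

variable {F D Pu : Type}

/-! ### R5. Positive folding -/

/-- **Rule R5 (positive folding).** Let `δ₁,…,δₘ` (clauses of `Defsₖ`, whose
`ρ`-variant `Defs'ₖ` has no common variables with `γ₁,…,γₘ`) constitute the
definition of a predicate, say with (renamed) head `K` and (renamed) body
`dᵢ ∧ Bᵢ` with `Bᵢ` non-empty; suppose there is a substitution `θ` such that, for
`i = 1,…,m`, `γᵢ = H ← c ∧ dᵢθ ∧ G_L ∧ Bᵢθ ∧ G_R`, and for every variable
`X ∈ FV(dᵢ ∧ Bᵢ) − FV(K)`: (i) `Xθ` is a variable not occurring in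
`{H, c, G_L, G_R}`, and (ii) `Xθ` does not occur in `Yθ` for any variable
`Y ∈ FV(dᵢ ∧ Bᵢ)` different from `X`. Then `γ₁,…,γₘ` are replaced by
`H ← c ∧ G_L ∧ Kθ ∧ G_R`. -/
def PosFoldStep (fi : F → List D → D) (Dk : Prog F Pu D)
    (γs δs : List (Clse F Pu D)) (P P' : Prog F Pu D) : Prop :=
  γs ≠ [] ∧ (∀ γ ∈ γs, γ ∈ P) ∧ (∀ δ ∈ δs, δ ∈ Dk) ∧
  ∃ ρ : Vr ≃ Vr,
    (∀ δ ∈ Dk, ∀ x ∈ (Clse.rename fi ρ δ).fv, ∀ γ ∈ γs, x ∉ γ.fv) ∧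
    ∃ K : Atm F Pu,
      (∀ δ ∈ δs, (Clse.rename fi ρ δ).head = K) ∧
      (∀ δ ∈ δs, δ.head.pred = K.pred) ∧
      (∀ δ₀ ∈ Dk, δ₀.head.pred = K.pred → δ₀ ∈ δs) ∧
      (∀ δ ∈ δs, δ.body ≠ []) ∧
      ∃ (θ : Vr → Trm F) (H : Atm F Pu) (c : Constr D) (Gl Gr : Goal F Pu),
        List.Forall₂ (fun γ δ =>
          γ = ⟨H, c.conj ((Clse.rename fi ρ δ).constr.subst fi θ),
                Gl ++ Goal.subst θ (Clse.rename fi ρ δ).body ++ Gr⟩) γs δs ∧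
        (∀ δ ∈ δs, ∀ x,
          x ∈ (Clse.rename fi ρ δ).constr.fv ∪ Goal.fv (Clse.rename fi ρ δ).body →
          x ∉ K.fv →
          ∃ x' : Vr, θ x = Trm.var x' ∧
            x' ∉ H.fv ∪ c.fv ∪ Goal.fv Gl ∪ Goal.fv Gr ∧
            ∀ y, y ∈ (Clse.rename fi ρ δ).constr.fv ∪
                Goal.fv (Clse.rename fi ρ δ).body →
              y ≠ x → ¬ (θ y).VarIn x') ∧
        P' = (P \ {γ | γ ∈ γs}) ∪ {⟨H, c, Gl ++ (true, K.subst θ) :: Gr⟩}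

/-! ### R6. Negative folding -/

/-- **Rule R6 (negative folding).** Let `δ : K ← d ∧ A` be the unique clause of the
definition of a predicate in `Defsₖ` (whose `ρ`-variant has no common variables
with `γ`), with `FV(K) = FV(d ∧ A)`; suppose there is a substitution `θ` such that
`γ = H ← c ∧ dθ ∧ G_L ∧ ¬Aθ ∧ G_R`. Then `γ` is replaced by
`H ← c ∧ dθ ∧ G_L ∧ ¬Kθ ∧ G_R`. -/
def NegFoldStep (fi : F → List D → D) (Dk : Prog F Pu D)
    (γ δ : Clse F Pu D) (P P' : Prog F Pu D) : Prop :=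
  γ ∈ P ∧ δ ∈ Dk ∧
  ∃ ρ : Vr ≃ Vr,
    (∀ δ₀ ∈ Dk, ∀ x ∈ (Clse.rename fi ρ δ₀).fv, x ∉ γ.fv) ∧
    ∃ (K A : Atm F Pu) (d : Constr D),
      Clse.rename fi ρ δ = ⟨K, d, [(true, A)]⟩ ∧
      (∀ δ₀ ∈ Dk, δ₀.head.pred = δ.head.pred → δ₀ = δ) ∧
      K.fv = d.fv ∪ A.fv ∧
      ∃ (θ : Vr → Trm F) (H : Atm F Pu) (c : Constr D) (Gl Gr : Goal F Pu),
        γ = ⟨H, c.conj (d.subst fi θ), Gl ++ (false, A.subst θ) :: Gr⟩ ∧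
        P' = (P \ {γ}) ∪
          {⟨H, c.conj (d.subst fi θ), Gl ++ (false, K.subst θ) :: Gr⟩}

end CLPS

namespace CLPS

variable {F D Pu : Type}

/-! ### R7. Replacement based on laws -/

/-- The laws `Γ₁ ⇒ Γ₂` of rule R7: boolean laws (1)–(6), laws of constraints
(7)–(9), and the law of equality (10); for the laws stated as `Γ₁ ⇔ Γ₂` both
directions are included. -/
inductive Law (fi : F → List D → D) : Prog F Pu D → Prog F Pu D → Prop where
  /-- (1) `{H ← c ∧ A ∧ ¬A ∧ G} ⇔ ∅` -/
  | bool1l (H : Atm F Pu) (c : Constr D) (A : Atm F Pu) (G : Goal F Pu) :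
      Law fi {⟨H, c, (true, A) :: (false, A) :: G⟩} ∅
  | bool1r (H : Atm F Pu) (c : Constr D) (A : Atm F Pu) (G : Goal F Pu) :
      Law fi ∅ {⟨H, c, (true, A) :: (false, A) :: G⟩}
  /-- (2) `{H ← c ∧ H ∧ G} ⇔ ∅` -/
  | bool2l (H : Atm F Pu) (c : Constr D) (G : Goal F Pu) :
      Law fi {⟨H, c, (true, H) :: G⟩} ∅
  | bool2r (H : Atm F Pu) (c : Constr D) (G : Goal F Pu) :
      Law fi ∅ {⟨H, c, (true, H) :: G⟩}
  /-- (3) `{H ← c ∧ G₁ ∧ A₁ ∧ A₂ ∧ G₂} ⇔ {H ← c ∧ G₁ ∧ A₂ ∧ A₁ ∧ G₂}` -/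
  | bool3 (H : Atm F Pu) (c : Constr D) (G₁ G₂ : Goal F Pu) (A₁ A₂ : Atm F Pu) :
      Law fi {⟨H, c, G₁ ++ (true, A₁) :: (true, A₂) :: G₂⟩}
        {⟨H, c, G₁ ++ (true, A₂) :: (true, A₁) :: G₂⟩}
  /-- (4) `{H ← c ∧ A ∧ A ∧ G} ⇒ {H ← c ∧ A ∧ G}` (only this direction) -/
  | bool4 (H : Atm F Pu) (c : Constr D) (A : Atm F Pu) (G : Goal F Pu) :
      Law fi {⟨H, c, (true, A) :: (true, A) :: G⟩} {⟨H, c, (true, A) :: G⟩}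
  /-- (5) `{H ← c ∧ G₁, H ← c ∧ d ∧ G₁ ∧ G₂} ⇔ {H ← c ∧ G₁}` -/
  | bool5l (H : Atm F Pu) (c d : Constr D) (G₁ G₂ : Goal F Pu) :
      Law fi {⟨H, c, G₁⟩, ⟨H, c.conj d, G₁ ++ G₂⟩} {⟨H, c, G₁⟩}
  | bool5r (H : Atm F Pu) (c d : Constr D) (G₁ G₂ : Goal F Pu) :
      Law fi {⟨H, c, G₁⟩} {⟨H, c, G₁⟩, ⟨H, c.conj d, G₁ ++ G₂⟩}
  /-- (6) `{H ← c ∧ A ∧ G, H ← c ∧ ¬A ∧ G} ⇒ {H ← c ∧ G}` (only this direction) -/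
  | bool6 (H : Atm F Pu) (c : Constr D) (A : Atm F Pu) (G : Goal F Pu) :
      Law fi {⟨H, c, (true, A) :: G⟩, ⟨H, c, (false, A) :: G⟩} {⟨H, c, G⟩}
  /-- (7) `{H ← c ∧ G} ⇔ ∅` if `c` is unsatisfiable -/
  | constr7l (H : Atm F Pu) (c : Constr D) (G : Goal F Pu)
      (h : ∀ v : Vr → D, ¬ c.sat v) : Law fi {⟨H, c, G⟩} ∅
  | constr7r (H : Atm F Pu) (c : Constr D) (G : Goal F Pu)
      (h : ∀ v : Vr → D, ¬ c.sat v) : Law fi ∅ {⟨H, c, G⟩}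
  /-- (8) `{H ← c₁ ∧ G} ⇔ {H ← c₂ ∧ G}` if `𝒟 ⊨ ∀(∃Y c₁ ↔ ∃Z c₂)` where
  `Y = FV(c₁) − FV({H,G})` and `Z = FV(c₂) − FV({H,G})` -/
  | constr8 (H : Atm F Pu) (c₁ c₂ : Constr D) (G : Goal F Pu)
      (h : ∀ v : Vr → D,
        existsOverSat (c₁.fv \ (H.fv ∪ Goal.fv G)) c₁ v ↔
        existsOverSat (c₂.fv \ (H.fv ∪ Goal.fv G)) c₂ v) :
      Law fi {⟨H, c₁, G⟩} {⟨H, c₂, G⟩}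
  /-- (9) `{H ← c ∧ G} ⇔ {H ← c₁ ∧ G, H ← c₂ ∧ G}` if `𝒟 ⊨ ∀(c ↔ (c₁ ∨ c₂))` -/
  | constr9l (H : Atm F Pu) (c c₁ c₂ : Constr D) (G : Goal F Pu)
      (h : ∀ v : Vr → D, c.sat v ↔ (c₁.sat v ∨ c₂.sat v)) :
      Law fi {⟨H, c, G⟩} {⟨H, c₁, G⟩, ⟨H, c₂, G⟩}
  | constr9r (H : Atm F Pu) (c c₁ c₂ : Constr D) (G : Goal F Pu)
      (h : ∀ v : Vr → D, c.sat v ↔ (c₁.sat v ∨ c₂.sat v)) :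
      Law fi {⟨H, c₁, G⟩, ⟨H, c₂, G⟩} {⟨H, c, G⟩}
  /-- (10) `{(H ← c ∧ G){X/t}} ⇔ {H ← X = t ∧ c ∧ G}` if `X` does not occur in `t` -/
  | eq10l (H : Atm F Pu) (c : Constr D) (G : Goal F Pu) (X : Vr) (t : Trm F)
      (h : ¬ t.VarIn X) :
      Law fi {Clse.subst fi (singleSub X t) ⟨H, c, G⟩}
        {⟨H, (eqTrms fi [Trm.var X] [t]).conj c, G⟩}
  | eq10r (H : Atm F Pu) (c : Constr D) (G : Goal F Pu) (X : Vr) (t : Trm F)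
      (h : ¬ t.VarIn X) :
      Law fi {⟨H, (eqTrms fi [Trm.var X] [t]).conj c, G⟩}
        {Clse.subst fi (singleSub X t) ⟨H, c, G⟩}

/-- **Rule R7 (replacement based on laws).** `Γ₁` is replaced by `Γ₂`, where
`Γ₁ ⇒ Γ₂` is one of the laws and `Γ₂` is locally stratified w.r.t. the fixed `σ`. -/
def ReplaceStep (fi : F → List D → D) (σ : GrAtm Pu D → W)
    (Γ₁ Γ₂ : Prog F Pu D) (P P' : Prog F Pu D) : Prop :=
  Law fi Γ₁ Γ₂ ∧ progLS fi σ Γ₂ ∧ P' = (P \ Γ₁) ∪ Γ₂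

/-! ### R8. Deletion of useless predicates -/

/-- `U` is a set of useless predicates: each `p ∈ U` is such that every clause of
`Def(p, P)` has a positive body literal whose predicate is in `U`. -/
def UselessSet (P : Prog F Pu D) (U : Set Pu) : Prop :=
  (∀ q ∈ U, predInProg q P) ∧
  ∀ p ∈ U, ∀ γ ∈ DefOf p P, ∃ l ∈ γ.body, l.1 = true ∧ (l.2).pred ∈ U

/-- `p` belongs to the maximal set of useless predicates of `P` -/
def UselessPred (P : Prog F Pu D) (p : Pu) : Prop :=
  ∃ U, p ∈ U ∧ UselessSet P U

/-- **Rule R8 (deletion of useless predicates).** -/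
def UselessStep (p : Pu) (P P' : Prog F Pu D) : Prop :=
  UselessPred P p ∧ P' = P \ DefOf p P

/-! ### R9 and R10. Constraint addition and deletion -/

/-- **Rule R9 (constraint addition).** The clause `γ₁ : H ← c ∧ G ∈ Pₖ` is replaced
by `γ₂ : H ← c ∧ d ∧ G`, where `M(Pₖ) ⊨ ∀((c ∧ G) → ∃X d)` with
`X = FV(d) − FV(γ₁)`. -/
def CAddStep (fi : F → List D → D) (σ : GrAtm Pu D → W)
    (γ₁ γ₂ : Clse F Pu D) (P P' : Prog F Pu D) : Prop :=
  γ₁ ∈ P ∧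
  ∃ (H : Atm F Pu) (c d : Constr D) (G : Goal F Pu),
    γ₁ = ⟨H, c, G⟩ ∧ γ₂ = ⟨H, c.conj d, G⟩ ∧
    (∃ M : Set (GrAtm Pu D), PerfWrt fi σ P M ∧
      ∀ v : Vr → D, c.sat v → (∀ l ∈ G, litTrue M (glit fi v l)) →
        existsOverSat (d.fv \ γ₁.fv) d v) ∧
    P' = (P \ {γ₁}) ∪ {γ₂}

/-- **Rule R10 (constraint deletion).** The clause `γ₁ : H ← c ∧ d ∧ G ∈ Pₖ` is
replaced by `γ₂ : H ← c ∧ G`, where `M(Pₖ) ⊨ ∀((c ∧ G) → ∃X d)` with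
`X = FV(d) − FV(H ← c ∧ G)`, provided `γ₂` is locally stratified w.r.t. `σ`. -/
def CDelStep (fi : F → List D → D) (σ : GrAtm Pu D → W)
    (γ₁ γ₂ : Clse F Pu D) (P P' : Prog F Pu D) : Prop :=
  γ₁ ∈ P ∧
  ∃ (H : Atm F Pu) (c d : Constr D) (G : Goal F Pu),
    γ₁ = ⟨H, c.conj d, G⟩ ∧ γ₂ = ⟨H, c, G⟩ ∧
    (∃ M : Set (GrAtm Pu D), PerfWrt fi σ P M ∧
      ∀ v : Vr → D, c.sat v → (∀ l ∈ G, litTrue M (glit fi v l)) →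
        existsOverSat (d.fv \ γ₂.fv) d v) ∧
    clauseLS fi σ γ₂ ∧
    P' = (P \ {γ₁}) ∪ {γ₂}

end CLPS

namespace CLPS

variable {F D Pu : Type}

/-! ### Transformation sequences -/

/-- The record of which transformation rule, with which data, is applied at each
step of a transformation sequence. -/
inductive RuleApp (F Pu D : Type) where
  /-- R1, introducing the definition clauses `δs` -/
  | defIntro (δs : List (Clse F Pu D))
  /-- R2, eliminating the definition of `p` -/
  | defElim (p : Pu)
  /-- R3, positive unfolding of the clause `γ` -/
  | posUnfold (γ : Clse F Pu D)
  /-- R4, negative unfolding of the clause `γ` -/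
  | negUnfold (γ : Clse F Pu D)
  /-- R5, folding of the clauses `γs` using the definition clauses `δs` -/
  | posFold (γs δs : List (Clse F Pu D))
  /-- R6, folding of the clause `γ` using the definition clause `δ` -/
  | negFold (γ δ : Clse F Pu D)
  /-- R7, replacement of `Γ₁` by `Γ₂` -/
  | replace (Γ₁ Γ₂ : Prog F Pu D)
  /-- R8, deletion of the useless predicate `p` -/
  | useless (p : Pu)
  /-- R9, constraint addition turning `γ₁` into `γ₂` -/
  | cAdd (γ₁ γ₂ : Clse F Pu D)
  /-- R10, constraint deletion turning `γ₁` into `γ₂` -/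
  | cDel (γ₁ γ₂ : Clse F Pu D)

/-- `IsStep fi σ Pint prog defs k r` : program `prog (k+1)` is derived from
`prog k` by applying the transformation rule recorded by `r` (and `defs (k+1)` is
the set of definitions introduced so far). -/
def IsStep (fi : F → List D → D) (σ : GrAtm Pu D → W) (Pint : Set Pu)
    (prog defs : ℕ → Prog F Pu D) (k : ℕ) : RuleApp F Pu D → Prop
  | .defIntro δs =>
      DefIntroStep fi σ prog k (defs k) δs (prog k) (prog (k+1)) (defs (k+1))
  | .defElim p => DefElimStep Pint p (prog k) (prog (k+1)) ∧ defs (k+1) = defs k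
  | .posUnfold γ => PosUnfoldStep fi γ (prog k) (prog (k+1)) ∧ defs (k+1) = defs k
  | .negUnfold γ => NegUnfoldStep fi γ (prog k) (prog (k+1)) ∧ defs (k+1) = defs k
  | .posFold γs δs =>
      PosFoldStep fi (defs k) γs δs (prog k) (prog (k+1)) ∧ defs (k+1) = defs k
  | .negFold γ δ =>
      NegFoldStep fi (defs k) γ δ (prog k) (prog (k+1)) ∧ defs (k+1) = defs k
  | .replace Γ₁ Γ₂ =>
      ReplaceStep fi σ Γ₁ Γ₂ (prog k) (prog (k+1)) ∧ defs (k+1) = defs k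
  | .useless p => UselessStep p (prog k) (prog (k+1)) ∧ defs (k+1) = defs k
  | .cAdd γ₁ γ₂ => CAddStep fi σ γ₁ γ₂ (prog k) (prog (k+1)) ∧ defs (k+1) = defs k
  | .cDel γ₁ γ₂ => CDelStep fi σ γ₁ γ₂ (prog k) (prog (k+1)) ∧ defs (k+1) = defs k

/-- A transformation sequence `P₀, …, Pₙ` using the local stratification `σ`:
`prog k` is the program `Pₖ`, `defs k` is the set `Defsₖ` of clauses introduced by
the definition introduction rule during `P₀, …, Pₖ`, and `rule k` records the rule
applied to derive `P_{k+1}` from `Pₖ`. The initial program `P₀` is a finite set of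
clauses which is locally stratified w.r.t. `σ`. -/
structure TransfSeq (fi : F → List D → D) (σ : GrAtm Pu D → W) (Pint : Set Pu)
    (n : ℕ) where
  prog : ℕ → Prog F Pu D
  defs : ℕ → Prog F Pu D
  rule : ℕ → RuleApp F Pu D
  finite0 : (prog 0).Finite
  strat0 : progLS fi σ (prog 0)
  defs0 : defs 0 = ∅
  step : ∀ k < n, IsStep fi σ Pint prog defs k (rule k)

variable {fi : F → List D → D} {σ : GrAtm Pu D → W} {Pint : Set Pu} {n : ℕ}

/-- A transformation sequence is admissible iff (1) every clause used for positive
folding is positively unfolded at some earlier or later step `j` with `0 < j < n` at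
which it belongs to `P_j`, and (2) once the definition elimination rule is applied,
only definition elimination steps follow. -/
def TransfSeq.Admissible (S : TransfSeq fi σ Pint n) : Prop :=
  (∀ k < n, ∀ γs δs, S.rule k = .posFold γs δs →
    ∀ δ ∈ δs, ∃ j, 0 < j ∧ j < n ∧ δ ∈ S.prog j ∧ S.rule j = .posUnfold δ) ∧
  (∀ m < n, (∃ p, S.rule m = .defElim p) →
    ∀ k, m ≤ k → k < n → ∃ p, S.rule k = .defElim p)

/-- the definition clause `δ` is used for an application of the folding rule in
`P_j, …, P_m` -/
def TransfSeq.UsedForFolding (S : TransfSeq fi σ Pint n) (j m : ℕ)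
    (δ : Clse F Pu D) : Prop :=
  ∃ k, j ≤ k ∧ k < m ∧ ∃ γs δs, S.rule k = .posFold γs δs ∧ δ ∈ δs

/-- The transformation sequence is ordered, with intermediate indices
`i ≤ j ≤ m ≤ n`: (1) `P₀, …, Pᵢ` is constructed by `i` applications of the
definition introduction rule (so `Pᵢ = P₀ ∪ Defsᵢ`); (2) `Pᵢ, …, P_j` is
constructed by positive unfolding of exactly those clauses of `Defsᵢ` which are used
for applications of the folding rule in `P_j, …, Pₘ`; (3) `P_j, …, Pₘ` is
constructed by applying any rule except definition introduction and elimination;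
(4) `Pₘ, …, Pₙ` is constructed by applying the definition elimination rule. -/
def TransfSeq.OrderedAt (S : TransfSeq fi σ Pint n) (i j m : ℕ) : Prop :=
  i ≤ j ∧ j ≤ m ∧ m ≤ n ∧
  (∀ k < i, ∃ δs, S.rule k = .defIntro δs) ∧
  S.prog i = S.prog 0 ∪ S.defs i ∧
  (∀ k, i ≤ k → k < j →
    ∃ δ, S.rule k = .posUnfold δ ∧ δ ∈ S.defs i ∧ S.UsedForFolding j m δ) ∧
  (∀ δ ∈ S.defs i, S.UsedForFolding j m δ →
    ∃ k, i ≤ k ∧ k < j ∧ S.rule k = .posUnfold δ) ∧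
  (∀ k, j ≤ k → k < m →
    (∀ δs, S.rule k ≠ .defIntro δs) ∧ (∀ p, S.rule k ≠ .defElim p)) ∧
  (∀ k, m ≤ k → k < n → ∃ p, S.rule k = .defElim p)

/-- the transformation sequence is ordered -/
def TransfSeq.Ordered (S : TransfSeq fi σ Pint n) : Prop :=
  ∃ i j m, S.OrderedAt i j m

end CLPS

namespace CLPS

variable {F D Pu : Type}

/-! ### Proof trees -/

/-- Finite trees whose internal nodes are ground atoms; the children of a node are
either subtrees (corresponding to positive literals) or leaves labelled by a ground
atom `B` (corresponding to negative literals `¬B`). A node with the empty list of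
children is a node whose unique child is the empty conjunction `true`. -/
inductive PT (Pu D : Type) : Type where
  | node (A : GrAtm Pu D) (children : List (PT Pu D ⊕ GrAtm Pu D)) : PT Pu D

/-- the ground atom at the root of a tree -/
def PT.root : PT Pu D → GrAtm Pu D
  | .node A _ => A

/-- the ground literal corresponding to a child of a node of a tree -/
def childLit : PT Pu D ⊕ GrAtm Pu D → Bool × GrAtm Pu D
  | .inl t => (true, t.root)
  | .inr B => (false, B)

/-- Validity of a tree w.r.t. a program `P` and an "oracle" `O` for the negative
leaves: each node `A` with children `L₁,…,Lᵣ` must be obtained from a ground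
instance `A ← c ∧ L₁ ∧ … ∧ Lᵣ` (with `𝒟 ⊨ c`) of a clause of `P`, and every
negative leaf `¬B` must satisfy `O B`. -/
inductive PT.ValidW (fi : F → List D → D) (P : Prog F Pu D) (O : GrAtm Pu D → Prop) :
    PT Pu D → Prop where
  | node {A : GrAtm Pu D} {cs : List (PT Pu D ⊕ GrAtm Pu D)}
      (hc : ∃ γ ∈ P, ∃ v : Vr → D, γ.constr.sat v ∧ γ.head.eval fi v = A ∧
        γ.body.map (glit fi v) = cs.map childLit)
      (hpos : ∀ t, Sum.inl t ∈ cs → PT.ValidW fi P O t)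
      (hneg : ∀ B, Sum.inr B ∈ cs → O B) :
      PT.ValidW fi P O (.node A cs)

/-- `HasPTAux fi σ P α A` holds iff there is a proof tree for `A` and `P`, where a
negative leaf `¬B` is allowed only if there is no proof tree for `B` and `P` among
the proof trees for ground atoms of stratum `< α`. -/
def HasPTAux (fi : F → List D → D) (σ : GrAtm Pu D → W) (P : Prog F Pu D)
    (α : W) (A : GrAtm Pu D) : Prop :=
  ∃ T : PT Pu D, T.root = A ∧
    PT.ValidW fi P (fun B => ∀ _hlt : σ B < α, ¬ HasPTAux fi σ P (σ B) B) T
termination_by α.1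
decreasing_by exact _hlt

/-- there exists a proof tree for the ground atom `A` and the program `P` -/
def HasProofTree (fi : F → List D → D) (σ : GrAtm Pu D → W) (P : Prog F Pu D)
    (A : GrAtm Pu D) : Prop :=
  HasPTAux fi σ P (σ A) A

/-- `T` is a proof tree for the ground atom `A` and the program `P` -/
def IsProofTree (fi : F → List D → D) (σ : GrAtm Pu D → W) (P : Prog F Pu D)
    (A : GrAtm Pu D) (T : PT Pu D) : Prop :=
  T.root = A ∧
    PT.ValidW fi P (fun B => ∀ _hlt : σ B < σ A, ¬ HasPTAux fi σ P (σ B) B) T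

/-! ### The measure `μ` and `P_j`-consistency -/

mutual
  /-- `size(T)` : the number of atoms occurring at non-leaf nodes of `T` -/
  inductive PT.HasSize : PT Pu D → ℕ → Prop where
    | node {A cs n} : ChildrenSize cs n → PT.HasSize (.node A cs) (1 + n)
  /-- total size of the subtrees among a list of children -/
  inductive ChildrenSize : List (PT Pu D ⊕ GrAtm Pu D) → ℕ → Prop where
    | nil : ChildrenSize [] 0
    | inl {t cs n m} : PT.HasSize t n → ChildrenSize cs m →
        ChildrenSize (Sum.inl t :: cs) (n + m)
    | inr {B cs m} : ChildrenSize cs m → ChildrenSize (Sum.inr B :: cs) m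
end

/-- the (non-strict) lexicographic ordering `≤_lex` on `W × ℕ` -/
def wnLE (a b : W × ℕ) : Prop := a.1 < b.1 ∨ (a.1 = b.1 ∧ a.2 ≤ b.2)

/-- the strict lexicographic ordering `<_lex` on `W × ℕ` -/
def wnLT (a b : W × ℕ) : Prop := a.1 < b.1 ∨ (a.1 = b.1 ∧ a.2 < b.2)

/-- `⟨α₁,m₁⟩ ⊕ ⟨α₂,m₂⟩ = ⟨max(α₁,α₂), m₁+m₂⟩` -/
noncomputable def oplus (a b : W × ℕ) : W × ℕ := (max a.1 b.1, a.2 + b.2)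

/-- `μ(A,P) = min_lex {⟨σ(A), size(T)⟩ | T is a proof tree for A and P}`:
`muAtomIs fi σ P A m` states that `μ(A,P)` is defined and equal to `m`. -/
def muAtomIs (fi : F → List D → D) (σ : GrAtm Pu D → W) (P : Prog F Pu D)
    (A : GrAtm Pu D) (m : W × ℕ) : Prop :=
  (∃ (T : PT Pu D) (sz : ℕ), IsProofTree fi σ P A T ∧ T.HasSize sz ∧ m = (σ A, sz)) ∧
  (∀ (T : PT Pu D) (sz : ℕ), IsProofTree fi σ P A T → T.HasSize sz → wnLE m (σ A, sz))

/-- `μ` on ground literals: `μ(A,P)` for an atom, `⟨σ(A),0⟩` for `¬A` -/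
def muLitIs (fi : F → List D → D) (σ : GrAtm Pu D → W) (P : Prog F Pu D) :
    Bool × GrAtm Pu D → W × ℕ → Prop
  | (true, A), m => muAtomIs fi σ P A m
  | (false, A), m => m = (σ A, 0)

/-- `μ(L₁ ∧ … ∧ Lₙ, P) = μ(L₁,P) ⊕ … ⊕ μ(Lₙ,P)` -/
inductive muGoalIs (fi : F → List D → D) (σ : GrAtm Pu D → W) (P : Prog F Pu D) :
    List (Bool × GrAtm Pu D) → W × ℕ → Prop where
  | nil : muGoalIs fi σ P [] (zeroW, 0)
  | cons {l G m mg} : muLitIs fi σ P l m → muGoalIs fi σ P G mg →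
      muGoalIs fi σ P (l :: G) (oplus m mg)

/-- `T` is `P_j`-consistent: for every ground atom `B` which is the father of the
ground literals `L₁,…,Lᵣ` in `T`, `μ(B,P_j) > μ(L₁ ∧ … ∧ Lᵣ, P_j)`. -/
inductive PTConsistent (fi : F → List D → D) (σ : GrAtm Pu D → W)
    (Pj : Prog F Pu D) : PT Pu D → Prop where
  | node {A : GrAtm Pu D} {cs : List (PT Pu D ⊕ GrAtm Pu D)}
      (hmu : ∃ mA mG, muAtomIs fi σ Pj A mA ∧
        muGoalIs fi σ Pj (cs.map childLit) mG ∧ wnLT mG mA)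
      (hpos : ∀ t, Sum.inl t ∈ cs → PTConsistent fi σ Pj t) :
      PTConsistent fi σ Pj (.node A cs)

end CLPS

namespace CLPS

variable {F D Pu : Type} {fi : F → List D → D}

theorem Trm.eval_fn (v : Vr → D) (f : F) (ts : List (Trm F)) :
    (Trm.fn f ts).eval fi v = fi f (ts.map (Trm.eval fi v)) := by
  rw [Trm.eval, List.attach_map_val]

theorem Trm.subst_fn (s : Vr → Trm F) (f : F) (ts : List (Trm F)) :
    (Trm.fn f ts).subst s = Trm.fn f (ts.map (Trm.subst s)) := by
  rw [Trm.subst, List.attach_map_val]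

theorem Trm.eval_subst (s : Vr → Trm F) (v : Vr → D) :
    ∀ t : Trm F, (t.subst s).eval fi v = t.eval fi (fun x => (s x).eval fi v)
  | .var x => by rw [Trm.subst, Trm.eval]
  | .fn f ts => by
    rw [Trm.subst_fn, Trm.eval_fn, Trm.eval_fn, List.map_map]
    exact congrArg (fi f) (List.map_congr_left fun t _ => Trm.eval_subst s v t)
decreasing_by
  have := List.sizeOf_lt_of_mem ‹t ∈ ts›
  simp only [Trm.fn.sizeOf_spec]
  omega

theorem Trm.VarIn.subst (s : Vr → Trm F) {t : Trm F} {x y : Vr} (h : t.VarIn x)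
    (hy : (s x).VarIn y) : (t.subst s).VarIn y := by
  induction h with
  | var => rwa [Trm.subst]
  | fn hmem _ ih => rw [Trm.subst_fn]; exact .fn (List.mem_map_of_mem hmem) ih

theorem Atm.eval_subst (s : Vr → Trm F) (v : Vr → D) (A : Atm F Pu) :
    (A.subst s).eval fi v = A.eval fi (fun x => (s x).eval fi v) := by
  simp only [Atm.subst, Atm.eval, List.map_map]
  exact congrArg _ (List.map_congr_left fun t _ => Trm.eval_subst s v t)

theorem Atm.eval_congr {v w : Vr → D} (A : Atm F Pu) (h : ∀ x ∈ A.fv, v x = w x) :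
    A.eval fi v = A.eval fi w :=
  congrArg _ (List.map_congr_left fun t ht =>
    Trm.eval_congr fi _ t le_rfl v w fun x hx => h x ⟨t, ht, hx⟩)

theorem glit_subst (s : Vr → Trm F) (v : Vr → D) (l : Lit F Pu) :
    glit fi v (Lit.subst s l) = glit fi (fun x => (s x).eval fi v) l := by
  simp only [glit, Lit.subst, Atm.eval_subst]

theorem glit_congr {v w : Vr → D} (l : Lit F Pu) (h : ∀ x ∈ l.2.fv, v x = w x) :
    glit fi v l = glit fi w l := by
  rw [glit, glit, Atm.eval_congr l.2 h]

theorem rsub_eval (ρ : Vr ≃ Vr) (v : Vr → D) :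
    (fun x => (rsub (F := F) ρ x).eval fi v) = v ∘ ρ := by
  funext x; rw [rsub, Trm.eval, Function.comp_apply]

section Rename

variable (ρ : Vr ≃ Vr) (δ : Clse F Pu D) (u : Vr → D)

theorem Clse.rename_constr_sat : (δ.rename fi ρ).constr.sat u ↔ δ.constr.sat (u ∘ ρ) := by
  rw [← rsub_eval (F := F)]; rfl

theorem Clse.rename_head_eval : (δ.rename fi ρ).head.eval fi u = δ.head.eval fi (u ∘ ρ) := by
  rw [← rsub_eval (F := F)]; exact Atm.eval_subst _ u δ.head

theorem Clse.rename_body_glit :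
    (δ.rename fi ρ).body.map (glit fi u) = δ.body.map (glit fi (u ∘ ρ)) := by
  rw [← rsub_eval (F := F)]
  exact (List.map_map ..).trans (List.map_congr_left fun l _ => glit_subst _ u l)

theorem Clse.fv_rename {x : Vr} (hx : x ∈ δ.fv) : ρ x ∈ (δ.rename fi ρ).fv := by
  have hatom : ∀ B : Atm F Pu, x ∈ B.fv → ρ x ∈ (B.subst (rsub ρ)).fv :=
    fun B ⟨t, ht, hxt⟩ => ⟨_, List.mem_map_of_mem ht, hxt.subst _ .var⟩
  rcases hx with (hx | hx) | ⟨l, hl, hx⟩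
  · exact .inl (.inl (hatom _ hx))
  · exact .inl (.inr ⟨x, hx, .var⟩)
  · exact .inr ⟨Lit.subst (rsub ρ) l, List.mem_map_of_mem hl, hatom _ hx⟩

end Rename

def Clse.HasInstance (fi : F → List D → D) (γ : Clse F Pu D) (A : GrAtm Pu D)
    (ls : List (Bool × GrAtm Pu D)) : Prop :=
  ∃ v, γ.constr.sat v ∧ γ.head.eval fi v = A ∧ γ.body.map (glit fi v) = ls

theorem Clse.HasInstance.of_rename {ρ : Vr ≃ Vr} {δ : Clse F Pu D} {A : GrAtm Pu D}
    {ls : List (Bool × GrAtm Pu D)} (h : (δ.rename fi ρ).HasInstance fi A ls) :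
    δ.HasInstance fi A ls :=
  let ⟨u, hc, hH, hB⟩ := h
  ⟨u ∘ ρ, (Clse.rename_constr_sat ρ δ u).1 hc, (Clse.rename_head_eval ρ δ u).symm.trans hH,
    (Clse.rename_body_glit ρ δ u).symm.trans hB⟩

/-- The clause `H ← c ∧ A = K ∧ d ∧ G_L ∧ B ∧ G_R` obtained by unfolding
`H ← c ∧ G_L ∧ A ∧ G_R` with `δ : K ← d ∧ B`. -/
def unfoldClause (fi : F → List D → D) (H : Atm F Pu) (c : Constr D) (Gl Gr : Goal F Pu)
    (A : Atm F Pu) (δ : Clse F Pu D) : Clse F Pu D :=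
  ⟨H, c.conj ((eqTrms fi A.args δ.head.args).conj δ.constr), Gl ++ δ.body ++ Gr⟩

section Unfold

variable {H : Atm F Pu} {c : Constr D} {Gl Gr : Goal F Pu} {A : Atm F Pu} {δ : Clse F Pu D}

theorem Clse.HasInstance.of_unfoldClause {A₀ : GrAtm Pu D} {ls : List (Bool × GrAtm Pu D)}
    (h : (unfoldClause fi H c Gl Gr A δ).HasInstance fi A₀ ls) (hpred : δ.head.pred = A.pred) :
    ∃ u, c.sat u ∧ H.eval fi u = A₀ ∧
      δ.HasInstance fi (A.eval fi u) (δ.body.map (glit fi u)) ∧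
      ls = Gl.map (glit fi u) ++ δ.body.map (glit fi u) ++ Gr.map (glit fi u) := by
  obtain ⟨u, ⟨hc, heq, hδ⟩, hH, rfl⟩ := h
  exact ⟨u, hc, hH, ⟨u, hδ, Prod.ext hpred heq.symm, rfl⟩, by simp [unfoldClause]⟩

theorem unfoldClause_hasInstance {ρ : Vr ≃ Vr}
    (hdisj : ∀ x ∈ (δ.rename fi ρ).fv, x ∉ (⟨H, c, Gl ++ (true, A) :: Gr⟩ : Clse F Pu D).fv)
    {v : Vr → D} (hc : c.sat v) {ls : List (Bool × GrAtm Pu D)}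
    (hδ : δ.HasInstance fi (A.eval fi v) ls) :
    (unfoldClause fi H c Gl Gr A (δ.rename fi ρ)).HasInstance fi (H.eval fi v)
      (Gl.map (glit fi v) ++ ls ++ Gr.map (glit fi v)) := by
  classical
  obtain ⟨w, hδc, hδH, rfl⟩ := hδ
  set γfv := (⟨H, c, Gl ++ (true, A) :: Gr⟩ : Clse F Pu D).fv
  let u : Vr → D := fun x => if x ∈ γfv then v x else w (ρ.symm x)
  have huv : ∀ x ∈ γfv, u x = v x := fun x hx => if_pos hx
  have huw : ∀ x ∈ δ.fv, (u ∘ ρ) x = w x := fun x hx => by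
    simp [u, hdisj _ (Clse.fv_rename ρ δ hx)]
  have hlit : ∀ G : Goal F Pu, (∀ l ∈ G, l ∈ Gl ++ (true, A) :: Gr) →
      G.map (glit fi u) = G.map (glit fi v) := fun G hG =>
    List.map_congr_left fun l hl => glit_congr l fun x hx => huv x (.inr ⟨l, hG l hl, hx⟩)
  have hA : A.eval fi u = A.eval fi v :=
    congrArg Prod.snd (glit_congr (true, A) fun x hx => huv x (.inr ⟨_, by simp, hx⟩))
  have hδH' : δ.head.eval fi (u ∘ ρ) = δ.head.eval fi w :=
    Atm.eval_congr _ fun x hx => huw x (.inl (.inl hx))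
  refine ⟨u, ⟨c.supp v u (fun x hx => (huv x (.inl (.inr hx))).symm) hc, ?_, ?_⟩,
    Atm.eval_congr H fun x hx => huv x (.inl (.inl hx)), ?_⟩
  · exact congrArg Prod.snd
      (hA.trans (hδH.symm.trans (hδH'.symm.trans (Clse.rename_head_eval ρ δ u).symm)))
  · exact (Clse.rename_constr_sat ρ δ u).2
      (δ.constr.supp w _ (fun x hx => (huw x (.inl (.inr hx))).symm) hδc)
  · simp only [unfoldClause, List.map_append]
    rw [hlit Gl (by simp +contextual), hlit Gr (by simp +contextual), Clse.rename_body_glit]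
    exact congrArg (· ++ _) (congrArg (_ ++ ·)
      (List.map_congr_left fun l hl => glit_congr l fun x hx => huw x (.inr ⟨l, hl, hx⟩)))

end Unfold

section Provability

variable (fi) (Q : Prog F Pu D) (O : GrAtm Pu D → Prop)

def AtomProvable (A : GrAtm Pu D) : Prop := ∃ T : PT Pu D, T.root = A ∧ T.ValidW fi Q O

def LitProvable : Bool × GrAtm Pu D → Prop
  | (true, A) => AtomProvable fi Q O A
  | (false, A) => O A

/-- `A` is the head of a ground instance of a clause of `P` whose body literals are
provable in `Q`. -/
def ProvableByStep (P : Prog F Pu D) (A : GrAtm Pu D) : Prop :=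
  ∃ γ ∈ P, ∃ ls, γ.HasInstance fi A ls ∧ ∀ l ∈ ls, LitProvable fi Q O l

variable {fi Q O}

theorem litProvable_childLit {cs : List (PT Pu D ⊕ GrAtm Pu D)}
    (hpos : ∀ t, Sum.inl t ∈ cs → AtomProvable fi Q O t.root) (hneg : ∀ B, Sum.inr B ∈ cs → O B) :
    ∀ l ∈ cs.map childLit, LitProvable fi Q O l := by
  simp only [List.mem_map]
  rintro _ ⟨(t | B), hc, rfl⟩
  exacts [hpos t hc, hneg B hc]

theorem exists_children_of_litProvable :
    ∀ {ls : List (Bool × GrAtm Pu D)}, (∀ l ∈ ls, LitProvable fi Q O l) →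
      ∃ cs : List (PT Pu D ⊕ GrAtm Pu D), cs.map childLit = ls ∧
        (∀ t, Sum.inl t ∈ cs → t.ValidW fi Q O) ∧ ∀ B, Sum.inr B ∈ cs → O B
  | [], _ => ⟨[], rfl, by simp, by simp⟩
  | l :: ls, h => by
    obtain ⟨cs, hmap, hpos, hneg⟩ := exists_children_of_litProvable fun l' hl' =>
      h l' (List.mem_cons_of_mem l hl')
    obtain ⟨b, B⟩ := l
    have hl := h (b, B) List.mem_cons_self
    cases b with
    | true =>
      obtain ⟨T, hT, hTv⟩ := hl
      refine ⟨.inl T :: cs, by simp [childLit, hT, hmap], ?_, by simpa using hneg⟩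
      simpa [hTv] using hpos
    | false =>
      refine ⟨.inr B :: cs, by simp [childLit, hmap], by simpa using hpos,
        fun B' hB' => ?_⟩
      rcases List.mem_cons.1 hB' with hB' | hB'
      · cases hB'; exact hl
      · exact hneg B' hB'

theorem atomProvable_iff_provableByStep {A : GrAtm Pu D} :
    AtomProvable fi Q O A ↔ ProvableByStep fi Q O Q A := by
  constructor
  · rintro ⟨_, rfl, ⟨hc, hpos, hneg⟩⟩
    obtain ⟨γ, hγ, hinst⟩ := hc
    exact ⟨γ, hγ, _, hinst, litProvable_childLit (fun t ht => ⟨t, rfl, hpos t ht⟩) hneg⟩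
  · rintro ⟨γ, hγ, ls, hinst, hls⟩
    obtain ⟨cs, rfl, hpos, hneg⟩ := exists_children_of_litProvable hls
    exact ⟨.node A cs, rfl, .node ⟨γ, hγ, hinst⟩ hpos hneg⟩

end Provability

theorem exists_inl_of_true_mem_map_childLit {cs : List (PT Pu D ⊕ GrAtm Pu D)}
    {B : GrAtm Pu D} (h : (true, B) ∈ cs.map childLit) : ∃ t, Sum.inl t ∈ cs ∧ t.root = B := by
  obtain ⟨(t | B'), hc, heq⟩ := List.mem_map.1 h
  · exact ⟨t, hc, congrArg Prod.snd heq⟩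
  · cases heq

namespace PosUnfoldStep

variable {γ : Clse F Pu D} {P P' : Prog F Pu D} {O : GrAtm Pu D → Prop} {A₀ : GrAtm Pu D}

theorem atomProvable_of_provableByStep (hstep : PosUnfoldStep fi γ P P')
    (h : ProvableByStep fi P O P' A₀) : AtomProvable fi P O A₀ := by
  obtain ⟨hγP, H, c, Gl, Gr, A, rfl, ρ, -, rfl⟩ := hstep
  obtain ⟨η, hη, ls, hinst, hls⟩ := h
  rcases hη with ⟨hηP, -⟩ | ⟨δ, hδP, hpred, -, rfl⟩
  · exact atomProvable_iff_provableByStep.2 ⟨η, hηP, ls, hinst, hls⟩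
  obtain ⟨u, hc, hH, hδ, rfl⟩ := hinst.of_unfoldClause hpred
  have hA : AtomProvable fi P O (A.eval fi u) := atomProvable_iff_provableByStep.2
    ⟨δ, hδP, _, hδ.of_rename, fun l hl => hls l (by simp [hl])⟩
  refine atomProvable_iff_provableByStep.2 ⟨_, hγP, _, ⟨u, hc, hH, rfl⟩, fun l hl => ?_⟩
  simp only [List.map_append, List.map_cons, List.mem_append, List.mem_cons] at hl
  rcases hl with hl | rfl | hl
  · exact hls l (by simp [hl])
  · exact hA
  · exact hls l (by simp [hl])

theorem atomProvable_of_twoSteps (hstep : PosUnfoldStep fi γ P P') {δ₀ : Clse F Pu D}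
    (hδ₀ : δ₀ ∈ P) {ls : List (Bool × GrAtm Pu D)} (hinst : δ₀.HasInstance fi A₀ ls)
    (hls : ∀ l ∈ ls, LitProvable fi P' O l)
    (hpos : ∀ B, (true, B) ∈ ls → ProvableByStep fi P' O P B) : AtomProvable fi P' O A₀ := by
  obtain ⟨hγP, H, c, Gl, Gr, A, rfl, ρ, hdisj, rfl⟩ := hstep
  by_cases hne : δ₀ = ⟨H, c, Gl ++ (true, A) :: Gr⟩
  swap
  · exact atomProvable_iff_provableByStep.2 ⟨δ₀, .inl ⟨hδ₀, hne⟩, ls, hinst, hls⟩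
  subst hne
  obtain ⟨v, hc, rfl, rfl⟩ := hinst
  obtain ⟨δ, hδP, lsA, hδ, hlsA⟩ := hpos (A.eval fi v) (by simp [glit])
  have hunf := unfoldClause_hasInstance (hdisj δ hδP) hc hδ
  obtain ⟨w, -, hδA, -⟩ := hδ
  refine atomProvable_iff_provableByStep.2
    ⟨_, .inr ⟨δ, hδP, congrArg Prod.fst hδA, ⟨_, hunf.choose_spec.1⟩, rfl⟩, _, hunf, fun l hl => ?_⟩
  simp only [List.mem_append] at hl
  rcases hl with (hl | hl) | hl
  · exact hls l (by simp [hl])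
  · exact hlsA l hl
  · exact hls l (by simp [hl])

theorem atomProvable_iff (hstep : PosUnfoldStep fi γ P P') :
    AtomProvable fi P O A₀ ↔ AtomProvable fi P' O A₀ := by
  constructor
  · rintro ⟨T, rfl, hT⟩
    -- an unfolded node absorbs its child, so the induction also keeps a derivation step in `P`
    suffices AtomProvable fi P' O T.root ∧ ProvableByStep fi P' O P T.root from this.1
    induction hT with
    | node hc _ hneg ih =>
      obtain ⟨δ₀, hδ₀, hinst⟩ := hc
      have hls := litProvable_childLit (fun t ht => (ih t ht).1) hneg
      refine ⟨hstep.atomProvable_of_twoSteps hδ₀ hinst hls fun B hB => ?_, δ₀, hδ₀, _, hinst, hls⟩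
      obtain ⟨t, ht, rfl⟩ := exists_inl_of_true_mem_map_childLit hB
      exact (ih t ht).2
  · rintro ⟨T, rfl, hT⟩
    induction hT with
    | node hc _ hneg ih =>
      obtain ⟨η, hη, hinst⟩ := hc
      exact hstep.atomProvable_of_provableByStep ⟨η, hη, _, hinst, litProvable_childLit ih hneg⟩

end PosUnfoldStep

theorem hasPTAux_congr {σ : GrAtm Pu D → W} {P P' : Prog F Pu D}
    (h : ∀ O A, AtomProvable fi P O A ↔ AtomProvable fi P' O A) (α : W) (A : GrAtm Pu D) :
    HasPTAux fi σ P α A ↔ HasPTAux fi σ P' α A := by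
  induction α using WellFoundedLT.induction generalizing A with
  | _ α ih =>
    rw [HasPTAux, HasPTAux]
    have hO : (fun B => ∀ _ : σ B < α, ¬ HasPTAux fi σ P (σ B) B) =
        fun B => ∀ _ : σ B < α, ¬ HasPTAux fi σ P' (σ B) B :=
      funext fun B => propext (forall_congr' fun hlt => not_congr (ih _ hlt B))
    rw [hO]
    exact h _ A

theorem TransfSeq.hasPTAux_succ_iff_of_posUnfold {σ : GrAtm Pu D → W} {Pint : Set Pu} {n : ℕ}
    (S : TransfSeq fi σ Pint n) {k : ℕ} (hk : k < n) {δ : Clse F Pu D}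
    (hrule : S.rule k = .posUnfold δ) (α : W) (A : GrAtm Pu D) :
    HasPTAux fi σ (S.prog k) α A ↔ HasPTAux fi σ (S.prog (k + 1)) α A := by
  have hstep := S.step k hk
  rw [hrule] at hstep
  exact hasPTAux_congr (fun _ _ => hstep.1.atomProvable_iff) α A

end CLPS

namespace CLPS

/-- Let `P₀` be a locally stratified program and
`P₀,…,Pᵢ,…,P_j,…,Pₘ,…,Pₙ` an ordered transformation sequence. Then, for every
ground atom `A`, there exists a proof tree for `A` and `Pᵢ` if and only if there
exists a proof tree for `A` and `P_j`. -/
theorem proof_trees_preserved_by_unfolding_of_definitions {F D Pu : Type}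
    {fi : F → List D → D} {σ : GrAtm Pu D → W} {Pint : Set Pu} {n : ℕ}
    (S : TransfSeq fi σ Pint n) (i j m : ℕ) (hord : S.OrderedAt i j m)
    (A : GrAtm Pu D) :
    HasProofTree fi σ (S.prog i) A ↔ HasProofTree fi σ (S.prog j) A := by
  obtain ⟨hij, hjm, hmn, -, -, hunfold, -, -, -⟩ := hord
  suffices ∀ k, i ≤ k → k ≤ j →
      (HasProofTree fi σ (S.prog i) A ↔ HasProofTree fi σ (S.prog k) A) from this j hij le_rfl
  intro k hik
  induction k, hik using Nat.le_induction with
  | base => exact fun _ => Iff.rfl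
  | succ k hik ih =>
    intro hkj
    obtain ⟨δ, hrule, -⟩ := hunfold k hik (by omega)
    exact (ih (by omega)).trans (S.hasPTAux_succ_iff_of_posUnfold (by omega) hrule _ A)

end CLPS
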